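/- arXiv:1012.1956 — 3 statements merged into one kernel-verified Lean document; each statement's English description precedes it below -/
import Mathlib

section
/- Let (H,m,u,Δ,ε,ω,s,α,β) be a dual quasi-Hopf algebra over a field k. Then the convolution product S := β ∗ s ∗ α, i.e. the k-linear map S:H→H given by S(h)=β(h₁)s(h₂)α(h₃), is a preantipode for the underlying dual quasi-bialgebra H. -/
/-! Preliminaries: dual quasi-bialgebras, preantipodes and right dual
quasi-Hopf bicomodules, formulated via linear maps over a field `k`.
All Sweedler-notation identities are encoded as identities of (composites of)
linear maps on tensor products. -/

open TensorProduct

set_option maxHeartbeats 1000000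
set_option synthInstance.maxHeartbeats 400000

noncomputable section

universe u

section Defs

variable (k : Type u) [Field k] {H : Type u} [AddCommGroup H] [Module k H]

/-- Comultiplication on a two-fold tensor product induced by `c` on each factor:
`g ⊗ h ↦ (g₁ ⊗ h₁) ⊗ (g₂ ⊗ h₂)`. -/
def comul2 (c : H →ₗ[k] H ⊗[k] H) :
    (H ⊗[k] H) →ₗ[k] (H ⊗[k] H) ⊗[k] (H ⊗[k] H) :=
  (tensorTensorTensorComm k H H H H).toLinearMap ∘ₗ map c c

/-- Comultiplication on a three-fold tensor product. -/
def comul3 (c : H →ₗ[k] H ⊗[k] H) :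
    (H ⊗[k] (H ⊗[k] H)) →ₗ[k] (H ⊗[k] (H ⊗[k] H)) ⊗[k] (H ⊗[k] (H ⊗[k] H)) :=
  (tensorTensorTensorComm k H H (H ⊗[k] H) (H ⊗[k] H)).toLinearMap ∘ₗ map c (comul2 k c)

/-- Comultiplication on a four-fold tensor product. -/
def comul4 (c : H →ₗ[k] H ⊗[k] H) :
    (H ⊗[k] (H ⊗[k] (H ⊗[k] H))) →ₗ[k]
      (H ⊗[k] (H ⊗[k] (H ⊗[k] H))) ⊗[k] (H ⊗[k] (H ⊗[k] (H ⊗[k] H))) :=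
  (tensorTensorTensorComm k H H (H ⊗[k] (H ⊗[k] H)) (H ⊗[k] (H ⊗[k] H))).toLinearMap ∘ₗ
    map c (comul3 k c)

/-- Counit on a two-fold tensor product. -/
def counit2 (e : H →ₗ[k] k) : (H ⊗[k] H) →ₗ[k] k :=
  LinearMap.mul' k k ∘ₗ map e e

/-- Counit on a three-fold tensor product. -/
def counit3 (e : H →ₗ[k] k) : (H ⊗[k] (H ⊗[k] H)) →ₗ[k] k :=
  LinearMap.mul' k k ∘ₗ map e (counit2 k e)

/-- Counit on a four-fold tensor product. -/
def counit4 (e : H →ₗ[k] k) : (H ⊗[k] (H ⊗[k] (H ⊗[k] H))) →ₗ[k] k :=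
  LinearMap.mul' k k ∘ₗ map e (counit3 k e)

/-- Convolution product of two functionals with respect to a comultiplication `D`. -/
def conv (X : Type u) [AddCommGroup X] [Module k X] (D : X →ₗ[k] X ⊗[k] X)
    (φ ψ : X →ₗ[k] k) : X →ₗ[k] k :=
  LinearMap.mul' k k ∘ₗ map φ ψ ∘ₗ D

/-- Convolution `f ⋆ φ` of an `H`-valued map with a functional. -/
def convR (X : Type u) [AddCommGroup X] [Module k X] (D : X →ₗ[k] X ⊗[k] X)
    (f : X →ₗ[k] H) (φ : X →ₗ[k] k) : X →ₗ[k] H :=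
  (TensorProduct.rid k H).toLinearMap ∘ₗ map f φ ∘ₗ D

/-- Convolution `φ ⋆ f` of a functional with an `H`-valued map. -/
def convL (X : Type u) [AddCommGroup X] [Module k X] (D : X →ₗ[k] X ⊗[k] X)
    (φ : X →ₗ[k] k) (f : X →ₗ[k] H) : X →ₗ[k] H :=
  (TensorProduct.lid k H).toLinearMap ∘ₗ map φ f ∘ₗ D

end Defs

/-- A dual quasi-bialgebra `(H, m, u, Δ, ε, ω)` over a field `k`. -/
structure DualQuasiBialgebra (k : Type u) [Field k] (H : Type u)
    [AddCommGroup H] [Module k H] : Type u where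
  /-- the comultiplication `Δ` -/
  comul : H →ₗ[k] H ⊗[k] H
  /-- the counit `ε` -/
  counit : H →ₗ[k] k
  /-- the multiplication `m` -/
  mul : (H ⊗[k] H) →ₗ[k] H
  /-- the unit element `1_H` -/
  one : H
  /-- the reassociator `ω` -/
  omega : (H ⊗[k] (H ⊗[k] H)) →ₗ[k] k
  /-- the convolution inverse `ω⁻¹` of the reassociator -/
  omegaInv : (H ⊗[k] (H ⊗[k] H)) →ₗ[k] k
  /-- `Δ` is coassociative -/
  coassoc : (TensorProduct.assoc k H H H).toLinearMap ∘ₗ comul.rTensor H ∘ₗ comul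
      = comul.lTensor H ∘ₗ comul
  /-- `ε` is a left counit -/
  counit_comul : ∀ h : H, TensorProduct.lid k H ((counit.rTensor H) (comul h)) = h
  /-- `ε` is a right counit -/
  comul_counit : ∀ h : H, TensorProduct.rid k H ((counit.lTensor H) (comul h)) = h
  /-- `m` is a morphism of coalgebras: compatibility with `Δ` -/
  comul_mul : comul ∘ₗ mul = map mul mul ∘ₗ comul2 k comul
  /-- `m` is a morphism of coalgebras: compatibility with `ε` -/
  counit_mul : counit ∘ₗ mul = counit2 k counit
  /-- `u` is a morphism of coalgebras: `Δ(1_H) = 1_H ⊗ 1_H` -/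
  comul_one : comul one = one ⊗ₜ[k] one
  /-- `u` is a morphism of coalgebras: `ε(1_H) = 1` -/
  counit_one : counit one = 1
  /-- `m` is left unitary -/
  one_mul' : ∀ h : H, mul (one ⊗ₜ[k] h) = h
  /-- `m` is right unitary -/
  mul_one' : ∀ h : H, mul (h ⊗ₜ[k] one) = h
  /-- `ω⁻¹` is a right convolution inverse of `ω` -/
  omega_inv : conv k (H ⊗[k] (H ⊗[k] H)) (comul3 k comul) omega omegaInv = counit3 k counit
  /-- `ω⁻¹` is a left convolution inverse of `ω` -/
  inv_omega : conv k (H ⊗[k] (H ⊗[k] H)) (comul3 k comul) omegaInv omega = counit3 k counit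
  /-- the 3-cocycle condition:
  `ω(g₁⊗h₁⊗k₁l₁) ω(g₂h₂⊗k₂⊗l₂) = ε(g₁)ω(h₁⊗k₁⊗l₁) ⋆ ω(g⊗h₂k₂⊗l) ⋆ ω(g⊗h⊗k)ε(l)` -/
  omega_cocycle :
    conv k (H ⊗[k] (H ⊗[k] (H ⊗[k] H))) (comul4 k comul)
      (omega ∘ₗ LinearMap.lTensor H (LinearMap.lTensor H mul))
      (omega ∘ₗ mul.rTensor (H ⊗[k] H) ∘ₗ
        (TensorProduct.assoc k H H (H ⊗[k] H)).symm.toLinearMap)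
    = conv k (H ⊗[k] (H ⊗[k] (H ⊗[k] H))) (comul4 k comul)
        (LinearMap.mul' k k ∘ₗ map counit omega)
        (conv k (H ⊗[k] (H ⊗[k] (H ⊗[k] H))) (comul4 k comul)
          (omega ∘ₗ LinearMap.lTensor H
            (mul.rTensor H ∘ₗ (TensorProduct.assoc k H H H).symm.toLinearMap))
          (LinearMap.mul' k k ∘ₗ map omega counit ∘ₗ
            (TensorProduct.assoc k H (H ⊗[k] H) H).symm.toLinearMap ∘ₗ
            LinearMap.lTensor H (TensorProduct.assoc k H H H).symm.toLinearMap))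
  /-- unitality of `ω`: `ω(1_H ⊗ h ⊗ l) = ε(h)ε(l)` -/
  omega_one_left : ∀ x : H ⊗[k] H, omega (one ⊗ₜ[k] x) = counit2 k counit x
  /-- unitality of `ω`: `ω(g ⊗ 1_H ⊗ l) = ε(g)ε(l)` -/
  omega_one_mid : ∀ g h : H, omega (g ⊗ₜ[k] (one ⊗ₜ[k] h)) = counit g * counit h
  /-- unitality of `ω`: `ω(g ⊗ h ⊗ 1_H) = ε(g)ε(h)` -/
  omega_one_right : ∀ g h : H, omega (g ⊗ₜ[k] (h ⊗ₜ[k] one)) = counit g * counit h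
  /-- quasi-associativity: `g₁(h₁k₁) ω(g₂⊗h₂⊗k₂) = ω(g₁⊗h₁⊗k₁) (g₂h₂)k₂` -/
  quasi_assoc :
    convR k (H ⊗[k] (H ⊗[k] H)) (comul3 k comul) (mul ∘ₗ mul.lTensor H) omega
    = convL k (H ⊗[k] (H ⊗[k] H)) (comul3 k comul) omega
        (mul ∘ₗ mul.rTensor H ∘ₗ (TensorProduct.assoc k H H H).symm.toLinearMap)

section Preantipode

variable (k : Type u) [Field k] {H : Type u} [AddCommGroup H] [Module k H]

/-- `S : H → H` is a preantipode for the dual quasi-bialgebra `Q`: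
(P1) `S(h₂)₁ ⊗ h₁S(h₂)₂ = S(h) ⊗ 1_H`;
(P2) `S(h₁)₁h₂ ⊗ S(h₁)₂ = 1_H ⊗ S(h)`;
(P3) `ω(h₁ ⊗ S(h₂) ⊗ h₃) = ε(h)`. -/
def IsPreantipode (Q : DualQuasiBialgebra k H) (S : H →ₗ[k] H) : Prop :=
  (∀ h : H,
      (Q.mul.lTensor H ∘ₗ (TensorProduct.leftComm k H H H).toLinearMap ∘ₗ
        (Q.comul ∘ₗ S).lTensor H ∘ₗ Q.comul) h = S h ⊗ₜ[k] Q.one) ∧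
  (∀ h : H,
      (Q.mul.rTensor H ∘ₗ (TensorProduct.assoc k H H H).symm.toLinearMap ∘ₗ
        ((TensorProduct.comm k H H).toLinearMap.lTensor H) ∘ₗ
        (TensorProduct.assoc k H H H).toLinearMap ∘ₗ
        (Q.comul ∘ₗ S).rTensor H ∘ₗ Q.comul) h = Q.one ⊗ₜ[k] S h) ∧
  (∀ h : H,
      (Q.omega ∘ₗ (S.rTensor H).lTensor H ∘ₗ Q.comul.lTensor H ∘ₗ Q.comul) h = Q.counit h)

end Preantipode

/-- A right dual quasi-Hopf `H`-bicomodule over the dual quasi-bialgebra `Q`. -/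
structure Bicomodule (k : Type u) [Field k] (H : Type u) [AddCommGroup H] [Module k H]
    (Q : DualQuasiBialgebra k H) (M : Type u) [AddCommGroup M] [Module k M] : Type u where
  /-- the left `H`-coaction `ρˡ : m ↦ m₋₁ ⊗ m₀` -/
  coactL : M →ₗ[k] H ⊗[k] M
  /-- the right `H`-coaction `ρʳ : m ↦ m₀ ⊗ m₁` -/
  coactR : M →ₗ[k] M ⊗[k] H
  /-- the right `H`-action `m ⊗ h ↦ mh` -/
  act : (M ⊗[k] H) →ₗ[k] M
  /-- coassociativity of the left coaction -/
  coassocL : (TensorProduct.assoc k H H M).toLinearMap ∘ₗ Q.comul.rTensor M ∘ₗ coactL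
      = coactL.lTensor H ∘ₗ coactL
  /-- counitality of the left coaction -/
  counitL : ∀ m : M, TensorProduct.lid k M ((Q.counit.rTensor M) (coactL m)) = m
  /-- coassociativity of the right coaction -/
  coassocR : (TensorProduct.assoc k M H H).toLinearMap ∘ₗ coactR.rTensor H ∘ₗ coactR
      = Q.comul.lTensor M ∘ₗ coactR
  /-- counitality of the right coaction -/
  counitR : ∀ m : M, TensorProduct.rid k M ((Q.counit.lTensor M) (coactR m)) = m
  /-- the two coactions commute: `M` is an `H`-bicomodule -/
  bicom : coactR.lTensor H ∘ₗ coactL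
      = (TensorProduct.assoc k H M H).toLinearMap ∘ₗ coactL.rTensor H ∘ₗ coactR
  /-- unitality of the action: `m·1_H = m` -/
  act_one : ∀ m : M, act (m ⊗ₜ[k] Q.one) = m
  /-- left colinearity of the action: `(mh)₋₁ ⊗ (mh)₀ = m₋₁h₁ ⊗ m₀h₂` -/
  coactL_act : coactL ∘ₗ act
      = map Q.mul act ∘ₗ (tensorTensorTensorComm k H M H H).toLinearMap ∘ₗ map coactL Q.comul
  /-- right colinearity of the action: `(mh)₀ ⊗ (mh)₁ = m₀h₁ ⊗ m₁h₂` -/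
  coactR_act : coactR ∘ₗ act
      = map act Q.mul ∘ₗ (tensorTensorTensorComm k M H H H).toLinearMap ∘ₗ map coactR Q.comul
  /-- quasi-associativity of the action:
  `(mh)l = ω⁻¹(m₋₁⊗h₁⊗l₁) m₀(h₂l₂) ω(m₁⊗h₃⊗l₃)` -/
  act_act : act ∘ₗ act.rTensor H
      = (TensorProduct.rid k M).toLinearMap ∘ₗ
        map (act ∘ₗ Q.mul.lTensor M) Q.omega ∘ₗ
        ((tensorTensorTensorComm k M H (H ⊗[k] H) (H ⊗[k] H)).toLinearMap ∘ₗ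
          map coactR (comul2 k Q.comul)) ∘ₗ
        (TensorProduct.lid k (M ⊗[k] (H ⊗[k] H))).toLinearMap ∘ₗ
        map Q.omegaInv (LinearMap.id : M ⊗[k] (H ⊗[k] H) →ₗ[k] M ⊗[k] (H ⊗[k] H)) ∘ₗ
        ((tensorTensorTensorComm k H M (H ⊗[k] H) (H ⊗[k] H)).toLinearMap ∘ₗ
          map coactL (comul2 k Q.comul)) ∘ₗ
        (TensorProduct.assoc k M H H).toLinearMap

section Coinv

variable (k : Type u) [Field k] {H : Type u} [AddCommGroup H] [Module k H]
  {M : Type u} [AddCommGroup M] [Module k M]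

/-- The coinvariants `{x ∈ M ∣ ρʳ(x) = x ⊗ 1_H}` of a right coaction `r`. -/
def coinv (oneH : H) (r : M →ₗ[k] M ⊗[k] H) : Submodule k M :=
  LinearMap.ker (r - (TensorProduct.mk k M H).flip oneH)

variable {Q : DualQuasiBialgebra k H}

/-- The canonical map `ε_M : M^{coH} ⊗ H → M`, `m ⊗ h ↦ mh`. -/
def epsM (B : Bicomodule k H Q M) :
    ((coinv k Q.one B.coactR) ⊗[k] H) →ₗ[k] M :=
  B.act ∘ₗ map (coinv k Q.one B.coactR).subtype LinearMap.id

end Coinv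

section TauMaps

variable (k : Type u) [Field k] {H : Type u} [AddCommGroup H] [Module k H]
  {M : Type u} [AddCommGroup M] [Module k M] {Q : DualQuasiBialgebra k H}

/-- The swap `(b ⊗ c) ⊗ d ↦ (b ⊗ d) ⊗ c`. -/
def sigmaSwap : ((H ⊗[k] H) ⊗[k] H) →ₗ[k] ((H ⊗[k] H) ⊗[k] H) :=
  (TensorProduct.assoc k H H H).symm.toLinearMap ∘ₗ
    (TensorProduct.comm k H H).toLinearMap.lTensor H ∘ₗ
    (TensorProduct.assoc k H H H).toLinearMap

/-- The map `τ : M → M`, `τ(m) = ω(m₋₁ ⊗ S(m₁)₁ ⊗ m₂) · m₀ S(m₁)₂`,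
associated to a preantipode-candidate `S`. -/
def tauMap (B : Bicomodule k H Q M) (S : H →ₗ[k] H) : M →ₗ[k] M :=
  (TensorProduct.lid k M).toLinearMap ∘ₗ
    map Q.omega B.act ∘ₗ
    (TensorProduct.assoc k H (H ⊗[k] H) (M ⊗[k] H)).symm.toLinearMap ∘ₗ
    ((TensorProduct.leftComm k M (H ⊗[k] H) H).toLinearMap ∘ₗ
      (sigmaSwap k).lTensor M).lTensor H ∘ₗ
    (((Q.comul ∘ₗ S).rTensor H).lTensor M).lTensor H ∘ₗ
    (Q.comul.lTensor M).lTensor H ∘ₗ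
    B.coactR.lTensor H ∘ₗ
    B.coactL

/-- For a linear map `t : M → M`, the map
`m ⊗ h ↦ ω⁻¹(t(m₀)₋₁ ⊗ m₁ ⊗ h) · t(m₀)₀`. -/
def rhsTauAct (B : Bicomodule k H Q M) (t : M →ₗ[k] M) : (M ⊗[k] H) →ₗ[k] M :=
  (TensorProduct.lid k M).toLinearMap ∘ₗ
    map Q.omegaInv (LinearMap.id : M →ₗ[k] M) ∘ₗ
    (TensorProduct.assoc k H (H ⊗[k] H) M).symm.toLinearMap ∘ₗ
    (TensorProduct.comm k M (H ⊗[k] H)).toLinearMap.lTensor H ∘ₗ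
    (TensorProduct.assoc k H M (H ⊗[k] H)).toLinearMap ∘ₗ
    (TensorProduct.assoc k (H ⊗[k] M) H H).toLinearMap ∘ₗ
    ((B.coactL ∘ₗ t).rTensor H).rTensor H ∘ₗ
    B.coactR.rTensor H

/-- For a linear map `t : M → M`, the map `m ↦ t(m₀)₋₁ m₁ ⊗ t(m₀)₀`. -/
def rhsColinear (B : Bicomodule k H Q M) (t : M →ₗ[k] M) : M →ₗ[k] (H ⊗[k] M) :=
  Q.mul.rTensor M ∘ₗ
    (TensorProduct.assoc k H H M).symm.toLinearMap ∘ₗ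
    (TensorProduct.comm k M H).toLinearMap.lTensor H ∘ₗ
    (TensorProduct.assoc k H M H).toLinearMap ∘ₗ
    (B.coactL ∘ₗ t).rTensor H ∘ₗ
    B.coactR

end TauMaps

section Hat

variable (k : Type u) [Field k] {H : Type u} [AddCommGroup H] [Module k H]

/-- The right `H`-coaction on `H ⊗̂ H`: `h ⊗ l ↦ (h₁ ⊗ l₁) ⊗ h₂l₂`. -/
def hatCoactR (Q : DualQuasiBialgebra k H) : (H ⊗[k] H) →ₗ[k] (H ⊗[k] H) ⊗[k] H :=
  Q.mul.lTensor (H ⊗[k] H) ∘ₗ comul2 k Q.comul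

/-- The left `H`-coaction on `H ⊗̂ H`: `h ⊗ l ↦ l₁ ⊗ (h ⊗ l₂)`. -/
def hatCoactL (Q : DualQuasiBialgebra k H) : (H ⊗[k] H) →ₗ[k] H ⊗[k] (H ⊗[k] H) :=
  (TensorProduct.leftComm k H H H).toLinearMap ∘ₗ Q.comul.lTensor H

/-- The right `H`-action on `H ⊗̂ H`:
`(x ⊗ y) · h = (x₁ ⊗ y₁h₁) · ω(x₂ ⊗ y₂ ⊗ h₂)`. -/
def hatAct (Q : DualQuasiBialgebra k H) : ((H ⊗[k] H) ⊗[k] H) →ₗ[k] (H ⊗[k] H) :=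
  (TensorProduct.rid k (H ⊗[k] H)).toLinearMap ∘ₗ
    map (Q.mul.lTensor H ∘ₗ (TensorProduct.assoc k H H H).toLinearMap)
      (Q.omega ∘ₗ (TensorProduct.assoc k H H H).toLinearMap) ∘ₗ
    (tensorTensorTensorComm k (H ⊗[k] H) (H ⊗[k] H) H H).toLinearMap ∘ₗ
    map (comul2 k Q.comul) Q.comul

/-- The map `ε̂_H : (H ⊗̂ H)^{coH} ⊗ H → H ⊗ H`,
`(x ⊗ y) ⊗ h ↦ x₁ ⊗ y₁h₁ · ω(x₂ ⊗ y₂ ⊗ h₂)`. -/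
def epsHat (Q : DualQuasiBialgebra k H) :
    ((coinv k Q.one (hatCoactR k Q)) ⊗[k] H) →ₗ[k] H ⊗[k] H :=
  hatAct k Q ∘ₗ map (coinv k Q.one (hatCoactR k Q)).subtype LinearMap.id

end Hat

section GroupAlgebra

variable (k : Type u) [Field k] (G : Type u) [Group G]

/-- The group-like comultiplication on the group algebra `kG`: `g ↦ g ⊗ g`. -/
def comulG : MonoidAlgebra k G →ₗ[k] MonoidAlgebra k G ⊗[k] MonoidAlgebra k G :=
  Finsupp.lift (MonoidAlgebra k G ⊗[k] MonoidAlgebra k G) k G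
    (fun g => MonoidAlgebra.of k G g ⊗ₜ[k] MonoidAlgebra.of k G g) ∘ₗ
      (MonoidAlgebra.coeffLinearEquiv k).toLinearMap

/-- The counit on the group algebra `kG`: `g ↦ 1`. -/
def counitG : MonoidAlgebra k G →ₗ[k] k :=
  Finsupp.lift k k G (fun _ => (1 : k)) ∘ₗ
      (MonoidAlgebra.coeffLinearEquiv k).toLinearMap

/-- The linear extension of a map `θ : G × G × G → kˣ` to
`kG ⊗ kG ⊗ kG → k`. -/
def omegaTheta (θ : G → G → G → kˣ) :
    (MonoidAlgebra k G ⊗[k] (MonoidAlgebra k G ⊗[k] MonoidAlgebra k G)) →ₗ[k] k :=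
  TensorProduct.lift
    ((TensorProduct.lift.equiv (RingHom.id k) (MonoidAlgebra k G) (MonoidAlgebra k G) k).toLinearMap ∘ₗ
      Finsupp.lift (MonoidAlgebra k G →ₗ[k] MonoidAlgebra k G →ₗ[k] k) k G
        (fun g => Finsupp.lift (MonoidAlgebra k G →ₗ[k] k) k G
          (fun h => Finsupp.lift k k G (fun l => ((θ g h l : kˣ) : k)) ∘ₗ
            (MonoidAlgebra.coeffLinearEquiv k).toLinearMap) ∘ₗ
          (MonoidAlgebra.coeffLinearEquiv k).toLinearMap) ∘ₗ
        (MonoidAlgebra.coeffLinearEquiv k).toLinearMap)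

/-- The candidate preantipode on `kG`: `S(g) = θ(g,g⁻¹,g)⁻¹ · g⁻¹`. -/
def preantipodeG (θ : G → G → G → kˣ) : MonoidAlgebra k G →ₗ[k] MonoidAlgebra k G :=
  Finsupp.lift (MonoidAlgebra k G) k G
    (fun g => (((θ g g⁻¹ g)⁻¹ : kˣ) : k) • MonoidAlgebra.of k G g⁻¹) ∘ₗ
      (MonoidAlgebra.coeffLinearEquiv k).toLinearMap

end GroupAlgebra

section DualQuasiHopf

variable (k : Type u) [Field k] {H : Type u} [AddCommGroup H] [Module k H]

/-- The iterated comultiplication `h ↦ h₁ ⊗ (h₂ ⊗ (h₃ ⊗ (h₄ ⊗ h₅)))`. -/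
def comul5Fold (c : H →ₗ[k] H ⊗[k] H) :
    H →ₗ[k] H ⊗[k] (H ⊗[k] (H ⊗[k] (H ⊗[k] H))) :=
  ((c.lTensor H).lTensor H).lTensor H ∘ₗ (c.lTensor H).lTensor H ∘ₗ c.lTensor H ∘ₗ c

/-- The reassociation `x₁ ⊗ (x₂ ⊗ (x₃ ⊗ x₄)) ↦ (x₁ ⊗ (x₂ ⊗ x₃)) ⊗ x₄`. -/
def reshape4 : (H ⊗[k] (H ⊗[k] (H ⊗[k] H))) →ₗ[k] ((H ⊗[k] (H ⊗[k] H)) ⊗[k] H) :=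
  (TensorProduct.assoc k H (H ⊗[k] H) H).symm.toLinearMap ∘ₗ
    (TensorProduct.assoc k H H H).symm.toLinearMap.lTensor H

/-- `x ⊗ (y ⊗ z) ↦ β(x) · s(y) · α(z)`. -/
def midBSA (s : H →ₗ[k] H) (α β : H →ₗ[k] k) : (H ⊗[k] (H ⊗[k] H)) →ₗ[k] H :=
  (TensorProduct.lid k H).toLinearMap ∘ₗ
    map β ((TensorProduct.rid k H).toLinearMap ∘ₗ map s α)

/-- `x ⊗ (y ⊗ z) ↦ α(x) · y · β(z)`. -/
def midAB (α β : H →ₗ[k] k) : (H ⊗[k] (H ⊗[k] H)) →ₗ[k] H :=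
  (TensorProduct.lid k H).toLinearMap ∘ₗ
    map α ((TensorProduct.rid k H).toLinearMap ∘ₗ map (LinearMap.id : H →ₗ[k] H) β)

/-- The datum `(s, α, β)` makes the dual quasi-bialgebra `Q` a dual quasi-Hopf algebra:
`s` is a coalgebra anti-homomorphism, `h₁β(h₂)s(h₃) = β(h)1_H`, `s(h₁)α(h₂)h₃ = α(h)1_H`,
`ω(h₁ ⊗ β(h₂)s(h₃)α(h₄) ⊗ h₅) = ε(h) = ω⁻¹(s(h₁) ⊗ α(h₂)h₃β(h₄) ⊗ s(h₅))`. -/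
def IsDualQuasiHopf (Q : DualQuasiBialgebra k H)
    (s : H →ₗ[k] H) (α β : H →ₗ[k] k) : Prop :=
  (Q.counit ∘ₗ s = Q.counit) ∧
  (Q.comul ∘ₗ s = map s s ∘ₗ (TensorProduct.comm k H H).toLinearMap ∘ₗ Q.comul) ∧
  (∀ h : H,
    Q.mul ((((TensorProduct.lid k H).toLinearMap ∘ₗ map β s).lTensor H)
      ((Q.comul.lTensor H) (Q.comul h))) = β h • Q.one) ∧
  (∀ h : H,
    Q.mul ((map s ((TensorProduct.lid k H).toLinearMap ∘ₗ
        map α (LinearMap.id : H →ₗ[k] H)))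
      ((Q.comul.lTensor H) (Q.comul h))) = α h • Q.one) ∧
  (∀ h : H,
    Q.omega ((((midBSA k s α β).rTensor H ∘ₗ reshape4 k).lTensor H)
      ((comul5Fold k Q.comul) h)) = Q.counit h) ∧
  (∀ h : H,
    Q.omegaInv ((map s (map (midAB k α β) s ∘ₗ reshape4 k))
      ((comul5Fold k Q.comul) h)) = Q.counit h)

/-- The convolution product `S = β ∗ s ∗ α`, i.e. `S(h) = β(h₁)s(h₂)α(h₃)`. -/
def dqhPreantipode (Q : DualQuasiBialgebra k H)
    (s : H →ₗ[k] H) (α β : H →ₗ[k] k) : H →ₗ[k] H :=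
  midBSA k s α β ∘ₗ Q.comul.lTensor H ∘ₗ Q.comul

end DualQuasiHopf

/-! Write `S = s ∘ (α ⇀ ·) ∘ (· ↼ β)`, i.e. `S h = s(β(h₁) h₂ α(h₃))`. As `s` reverses the
coproduct, `S(h)₁ ⊗ S(h)₂ = s(α ⇀ h₂) ⊗ s(h₁ ↼ β)`, so after reassociating by coassociativity the
left-hand sides of (P1) and (P2) read `s(α ⇀ h₃) ⊗ h₁ s(h₂ ↼ β)` and `s(α ⇀ h₂) h₃ ⊗ s(h₁ ↼ β)`.
The axioms `h₁ β(h₂) s(h₃) = β(h) 1` and `s(h₁) α(h₂) h₃ = α(h) 1` collapse these to `S h ⊗ 1` and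
`1 ⊗ S h` (the two hit actions commute). (P3) is the axiom on `ω` after reassociation. -/

section Hit

open Coalgebra

variable {R : Type*} [CommSemiring R] {C A B M : Type*} [AddCommMonoid C] [Module R C]
  [AddCommMonoid A] [Module R A] [AddCommMonoid B] [Module R B] [AddCommMonoid M] [Module R M]

section CoalgebraStruct

variable [CoalgebraStruct R C]

/-- The hit actions `φ ⇀ h = h₁ φ(h₂)` and `h ↼ φ = φ(h₁) h₂` of the dual on a coalgebra. -/
def leftHit (φ : C →ₗ[R] R) : C →ₗ[R] C :=
  (TensorProduct.rid R C).toLinearMap ∘ₗ φ.lTensor C ∘ₗ comul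

def rightHit (φ : C →ₗ[R] R) : C →ₗ[R] C :=
  (TensorProduct.lid R C).toLinearMap ∘ₗ φ.rTensor C ∘ₗ comul

theorem lid_comp_map_comp_comul (φ : C →ₗ[R] R) (f : C →ₗ[R] A) :
    (TensorProduct.lid R A).toLinearMap ∘ₗ map φ f ∘ₗ comul = f ∘ₗ rightHit φ := by
  rw [rightHit, ← LinearMap.comp_assoc, ← LinearMap.comp_assoc, ← LinearMap.comp_assoc]
  congr 1
  ext c a
  simp

theorem rid_comp_map_comp_comul (φ : C →ₗ[R] R) (f : C →ₗ[R] A) :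
    (TensorProduct.rid R A).toLinearMap ∘ₗ map f φ ∘ₗ comul = f ∘ₗ leftHit φ := by
  rw [leftHit, ← LinearMap.comp_assoc, ← LinearMap.comp_assoc, ← LinearMap.comp_assoc]
  congr 1
  ext c a
  simp

theorem map_smulRight_left_comp_comul (φ : C →ₗ[R] R) (x : A) (f : C →ₗ[R] B) :
    map (φ.smulRight x) f ∘ₗ comul = mk R A B x ∘ₗ f ∘ₗ rightHit φ := by
  rw [rightHit, ← LinearMap.comp_assoc, ← LinearMap.comp_assoc, ← LinearMap.comp_assoc]
  congr 1
  ext c a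
  simp [smul_tmul]

theorem map_smulRight_right_comp_comul (φ : C →ₗ[R] R) (x : A) (f : C →ₗ[R] B) :
    map f (φ.smulRight x) ∘ₗ comul = (mk R B A).flip x ∘ₗ f ∘ₗ leftHit φ := by
  rw [leftHit, ← LinearMap.comp_assoc, ← LinearMap.comp_assoc, ← LinearMap.comp_assoc]
  congr 1
  ext c a
  simp

end CoalgebraStruct

variable [Coalgebra R C]

theorem comp_lTensor_comul_comp_comul {F : C ⊗[R] (C ⊗[R] C) →ₗ[R] M}
    {G : (C ⊗[R] C) ⊗[R] C →ₗ[R] M} (h : F ∘ₗ (TensorProduct.assoc R C C C).toLinearMap = G) :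
    F ∘ₗ comul.lTensor C ∘ₗ comul = G ∘ₗ comul.rTensor C ∘ₗ comul := by
  rw [← h, LinearMap.comp_assoc, coassoc]

theorem comul_comp_leftHit (φ : C →ₗ[R] R) :
    comul ∘ₗ leftHit φ = (leftHit φ).lTensor C ∘ₗ comul := by
  calc comul ∘ₗ leftHit φ
      = ((TensorProduct.rid R (C ⊗[R] C)).toLinearMap ∘ₗ φ.lTensor (C ⊗[R] C)) ∘ₗ
          comul.rTensor C ∘ₗ comul := by
        simp only [leftHit, ← LinearMap.comp_assoc]
        congr 1
        ext a b
        simp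
    _ = ((TensorProduct.rid R C).toLinearMap.lTensor C ∘ₗ (φ.lTensor C).lTensor C) ∘ₗ
          comul.lTensor C ∘ₗ comul :=
        (comp_lTensor_comul_comp_comul (by ext a b c; simp)).symm
    _ = (leftHit φ).lTensor C ∘ₗ comul := by
        simp only [leftHit, LinearMap.lTensor_comp, LinearMap.comp_assoc]

theorem comul_comp_rightHit (φ : C →ₗ[R] R) :
    comul ∘ₗ rightHit φ = (rightHit φ).rTensor C ∘ₗ comul := by
  calc comul ∘ₗ rightHit φ
      = ((TensorProduct.lid R (C ⊗[R] C)).toLinearMap ∘ₗ φ.rTensor (C ⊗[R] C)) ∘ₗ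
          comul.lTensor C ∘ₗ comul := by
        simp only [rightHit, ← LinearMap.comp_assoc]
        congr 1
        ext a b
        simp
    _ = ((TensorProduct.lid R C).toLinearMap.rTensor C ∘ₗ (φ.rTensor C).rTensor C) ∘ₗ
          comul.rTensor C ∘ₗ comul :=
        comp_lTensor_comul_comp_comul (by ext a b c; simp [TensorProduct.smul_tmul'])
    _ = (rightHit φ).rTensor C ∘ₗ comul := by
        simp only [rightHit, LinearMap.rTensor_comp, LinearMap.comp_assoc]

theorem rTensor_leftHit_comp_comul (φ : C →ₗ[R] R) :
    (leftHit φ).rTensor C ∘ₗ comul = (rightHit φ).lTensor C ∘ₗ comul := by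
  calc (leftHit φ).rTensor C ∘ₗ comul
      = ((TensorProduct.rid R C).toLinearMap.rTensor C ∘ₗ (φ.lTensor C).rTensor C) ∘ₗ
          comul.rTensor C ∘ₗ comul := by
        simp only [leftHit, LinearMap.rTensor_comp, LinearMap.comp_assoc]
    _ = ((TensorProduct.lid R C).toLinearMap.lTensor C ∘ₗ (φ.rTensor C).lTensor C) ∘ₗ
          comul.lTensor C ∘ₗ comul :=
        (comp_lTensor_comul_comp_comul (by ext a b c; simp [TensorProduct.smul_tmul'])).symm
    _ = (rightHit φ).lTensor C ∘ₗ comul := by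
        simp only [rightHit, LinearMap.lTensor_comp, LinearMap.comp_assoc]

theorem rightHit_comp_leftHit (φ ψ : C →ₗ[R] R) :
    rightHit φ ∘ₗ leftHit ψ = leftHit ψ ∘ₗ rightHit φ := by
  have lid_lTensor : (TensorProduct.lid R C).toLinearMap ∘ₗ φ.rTensor C ∘ₗ (leftHit ψ).lTensor C =
      leftHit ψ ∘ₗ (TensorProduct.lid R C).toLinearMap ∘ₗ φ.rTensor C := by
    ext a b
    simp
  rw [rightHit, LinearMap.comp_assoc, LinearMap.comp_assoc, comul_comp_leftHit]
  simp only [← LinearMap.comp_assoc, lid_lTensor]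

theorem comul_comp_leftHit_comp_rightHit (α β : C →ₗ[R] R) :
    comul ∘ₗ leftHit α ∘ₗ rightHit β = map (rightHit β) (leftHit α) ∘ₗ comul := by
  rw [← LinearMap.comp_assoc, comul_comp_leftHit, LinearMap.comp_assoc, comul_comp_rightHit,
    ← LinearMap.comp_assoc, LinearMap.lTensor_comp_rTensor]

theorem comul_comp_comp_leftHit_comp_rightHit {s : C →ₗ[R] C}
    (hs : comul ∘ₗ s = map s s ∘ₗ (TensorProduct.comm R C C).toLinearMap ∘ₗ comul)
    (α β : C →ₗ[R] R) :
    comul ∘ₗ s ∘ₗ leftHit α ∘ₗ rightHit β =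
      map (s ∘ₗ leftHit α) (s ∘ₗ rightHit β) ∘ₗ (TensorProduct.comm R C C).toLinearMap ∘ₗ
        comul := by
  rw [← LinearMap.comp_assoc, hs, LinearMap.comp_assoc, LinearMap.comp_assoc,
    comul_comp_leftHit_comp_rightHit, ← LinearMap.comp_assoc comul, ← map_comp_comm_eq,
    LinearMap.comp_assoc, ← LinearMap.comp_assoc _ (map _ _), ← TensorProduct.map_comp]

theorem lTensor_comp_leftComm_comp_lTensor_comul (f : C →ₗ[R] A) (g : C →ₗ[R] B)
    (m : C ⊗[R] B →ₗ[R] M) :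
    m.lTensor A ∘ₗ (TensorProduct.leftComm R C A B).toLinearMap ∘ₗ
        (map f g ∘ₗ (TensorProduct.comm R C C).toLinearMap ∘ₗ comul).lTensor C ∘ₗ comul =
      (TensorProduct.comm R M A).toLinearMap ∘ₗ map (m ∘ₗ g.lTensor C ∘ₗ comul) f ∘ₗ comul := by
  calc _ = (m.lTensor A ∘ₗ (TensorProduct.leftComm R C A B).toLinearMap ∘ₗ
          (map f g ∘ₗ (TensorProduct.comm R C C).toLinearMap).lTensor C) ∘ₗ
          comul.lTensor C ∘ₗ comul := by
        simp only [LinearMap.lTensor_comp, LinearMap.comp_assoc]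
    _ = ((TensorProduct.comm R M A).toLinearMap ∘ₗ map (m ∘ₗ g.lTensor C) f) ∘ₗ
          comul.rTensor C ∘ₗ comul :=
        comp_lTensor_comul_comp_comul (by ext a b c; simp)
    _ = _ := by
        simp only [LinearMap.comp_assoc, ← LinearMap.comp_assoc _ (comul.rTensor C),
          LinearMap.map_comp_rTensor]

theorem rTensor_comp_assoc_comp_rTensor_comul (f : C →ₗ[R] A) (g : C →ₗ[R] B)
    (m : A ⊗[R] C →ₗ[R] M) :
    m.rTensor B ∘ₗ (TensorProduct.assoc R A C B).symm.toLinearMap ∘ₗ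
        (TensorProduct.comm R B C).toLinearMap.lTensor A ∘ₗ
        (TensorProduct.assoc R A B C).toLinearMap ∘ₗ
        (map f g ∘ₗ (TensorProduct.comm R C C).toLinearMap ∘ₗ comul).rTensor C ∘ₗ comul =
      (TensorProduct.comm R B M).toLinearMap ∘ₗ map g (m ∘ₗ f.rTensor C ∘ₗ comul) ∘ₗ comul := by
  simp only [coassoc_simps]

section Preantipode

variable {m : C ⊗[R] C →ₗ[R] C} {one : C} {s : C →ₗ[R] C} {α β : C →ₗ[R] R}

theorem lTensor_mul_leftComm_comul_comp_hits
    (hs : comul ∘ₗ s = map s s ∘ₗ (TensorProduct.comm R C C).toLinearMap ∘ₗ comul)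
    (hβ : m ∘ₗ ((TensorProduct.lid R C).toLinearMap ∘ₗ map β s).lTensor C ∘ₗ
      comul.lTensor C ∘ₗ comul = β.smulRight one) :
    m.lTensor C ∘ₗ (TensorProduct.leftComm R C C C).toLinearMap ∘ₗ
        (comul ∘ₗ s ∘ₗ leftHit α ∘ₗ rightHit β).lTensor C ∘ₗ comul =
      (mk R C C).flip one ∘ₗ s ∘ₗ leftHit α ∘ₗ rightHit β := by
  rw [← LinearMap.comp_assoc comul, ← LinearMap.lTensor_comp, LinearMap.comp_assoc comul,
    lid_comp_map_comp_comul] at hβ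
  calc _ = (TensorProduct.comm R C C).toLinearMap ∘ₗ
          map (m ∘ₗ (s ∘ₗ rightHit β).lTensor C ∘ₗ comul) (s ∘ₗ leftHit α) ∘ₗ comul := by
        rw [comul_comp_comp_leftHit_comp_rightHit hs, lTensor_comp_leftComm_comp_lTensor_comul]
    _ = ((TensorProduct.comm R C C).toLinearMap ∘ₗ mk R C C one) ∘ₗ
          s ∘ₗ leftHit α ∘ₗ rightHit β := by
        rw [hβ, map_smulRight_left_comp_comul]
        simp only [LinearMap.comp_assoc]
    _ = _ := rfl

theorem rTensor_mul_assoc_comul_comp_hits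
    (hs : comul ∘ₗ s = map s s ∘ₗ (TensorProduct.comm R C C).toLinearMap ∘ₗ comul)
    (hα : m ∘ₗ map s ((TensorProduct.lid R C).toLinearMap ∘ₗ map α LinearMap.id) ∘ₗ
      comul.lTensor C ∘ₗ comul = α.smulRight one) :
    m.rTensor C ∘ₗ (TensorProduct.assoc R C C C).symm.toLinearMap ∘ₗ
        (TensorProduct.comm R C C).toLinearMap.lTensor C ∘ₗ
        (TensorProduct.assoc R C C C).toLinearMap ∘ₗ
        (comul ∘ₗ s ∘ₗ leftHit α ∘ₗ rightHit β).rTensor C ∘ₗ comul =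
      mk R C C one ∘ₗ s ∘ₗ leftHit α ∘ₗ rightHit β := by
  have hα' : m ∘ₗ (s ∘ₗ leftHit α).rTensor C ∘ₗ comul = α.smulRight one := by
    rw [LinearMap.rTensor_comp, LinearMap.comp_assoc, rTensor_leftHit_comp_comul,
      ← LinearMap.comp_assoc _ (LinearMap.lTensor _ _), LinearMap.rTensor_comp_lTensor, ← hα,
      ← LinearMap.comp_assoc _ (LinearMap.lTensor _ _), LinearMap.map_comp_lTensor]
    rfl
  calc _ = (TensorProduct.comm R C C).toLinearMap ∘ₗ
          map (s ∘ₗ rightHit β) (m ∘ₗ (s ∘ₗ leftHit α).rTensor C ∘ₗ comul) ∘ₗ comul := by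
        rw [comul_comp_comp_leftHit_comp_rightHit hs, rTensor_comp_assoc_comp_rTensor_comul]
    _ = ((TensorProduct.comm R C C).toLinearMap ∘ₗ (mk R C C).flip one) ∘ₗ
          s ∘ₗ rightHit β ∘ₗ leftHit α := by
        rw [hα', map_smulRight_right_comp_comul]
        simp only [LinearMap.comp_assoc]
    _ = _ := by
        rw [rightHit_comp_leftHit]
        rfl

end Preantipode

end Hit

namespace DualQuasiBialgebra

variable {k : Type u} [Field k] {H : Type u} [AddCommGroup H] [Module k H]

abbrev toCoalgebra (Q : DualQuasiBialgebra k H) : Coalgebra k H where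
  comul := Q.comul
  counit := Q.counit
  coassoc := Q.coassoc
  rTensor_counit_comp_comul := by
    ext h
    exact (TensorProduct.lid k H).eq_symm_apply.mpr (Q.counit_comul h)
  lTensor_counit_comp_comul := by
    ext h
    exact (TensorProduct.rid k H).eq_symm_apply.mpr (Q.comul_counit h)

end DualQuasiBialgebra

section

open Coalgebra

variable {k : Type u} [Field k] {C : Type u} [AddCommGroup C] [Module k C]

theorem midBSA_comp_lTensor_comul_comp_comul [CoalgebraStruct k C] (s : C →ₗ[k] C)
    (α β : C →ₗ[k] k) :
    midBSA k s α β ∘ₗ comul.lTensor C ∘ₗ comul = s ∘ₗ leftHit α ∘ₗ rightHit β := by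
  rw [midBSA, LinearMap.comp_assoc, ← LinearMap.comp_assoc _ (LinearMap.lTensor _ _),
    LinearMap.map_comp_lTensor, lid_comp_map_comp_comul, LinearMap.comp_assoc comul,
    rid_comp_map_comp_comul, LinearMap.comp_assoc]

theorem lTensor_rTensor_comp_lTensor_comul_comp_comul [Coalgebra k C] {M : Type*}
    [AddCommGroup M] [Module k M] (F : C ⊗[k] (C ⊗[k] C) →ₗ[k] M) :
    ((F ∘ₗ comul.lTensor C ∘ₗ comul).rTensor C).lTensor C ∘ₗ comul.lTensor C ∘ₗ comul =
      (F.rTensor C ∘ₗ reshape4 k).lTensor C ∘ₗ comul5Fold k comul := by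
  simp only [reshape4, comul5Fold, coassoc_simps]

end

/-- For a dual quasi-Hopf algebra `(H, m, u, Δ, ε, ω, s, α, β)`, the
convolution product `S = β ∗ s ∗ α`, i.e. `S(h) = β(h₁)s(h₂)α(h₃)`, is a preantipode. -/
theorem dualQuasiHopf_preantipode
    (k : Type u) [Field k] (H : Type u) [AddCommGroup H] [Module k H]
    (Q : DualQuasiBialgebra k H) (s : H →ₗ[k] H) (α β : H →ₗ[k] k)
    (hQ : IsDualQuasiHopf k Q s α β) :
    IsPreantipode k Q (dqhPreantipode k Q s α β) := by
  let := Q.toCoalgebra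
  obtain ⟨-, hs, hβ, hα, hω, -⟩ := hQ
  have hS : dqhPreantipode k Q s α β = s ∘ₗ leftHit α ∘ₗ rightHit β :=
    midBSA_comp_lTensor_comul_comp_comul s α β
  refine ⟨fun h => ?_, fun h => ?_, fun h => ?_⟩
  · rw [hS]
    exact LinearMap.congr_fun (lTensor_mul_leftComm_comul_comp_hits hs (LinearMap.ext hβ)) h
  · rw [hS]
    exact LinearMap.congr_fun (rTensor_mul_assoc_comul_comp_hits hs (LinearMap.ext hα)) h
  · exact (congrArg Q.omega (LinearMap.congr_fun
      (lTensor_rTensor_comp_lTensor_comul_comp_comul (midBSA k s α β)) h)).trans (hω h)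

end
end

section
/- Let H be a dual quasi-bialgebra over a field k, let M be a right dual quasi-Hopf H-bicomodule, and let τ:M→M^{coH} be a k-linear map satisfying τ(m₀)m₁ = m for all m∈M. Then τ satisfies τ(mh)=ε(h)m for all m∈M^{coH} and h∈H if and only if τ satisfies both τ(mh)=ω⁻¹(τ(m₀)₋₁⊗m₁⊗h)·τ(m₀)₀ for all m∈M, h∈H, and m₋₁⊗τ(m₀)=τ(m₀)₋₁m₁⊗τ(m₀)₀ for all m∈M. -/
/-! Preliminaries: dual quasi-bialgebras, preantipodes and right dual
quasi-Hopf bicomodules, formulated via linear maps over a field `k`.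
All Sweedler-notation identities are encoded as identities of (composites of)
linear maps on tensor products. -/

open TensorProduct

set_option maxHeartbeats 1000000
set_option synthInstance.maxHeartbeats 400000

noncomputable section

universe u

/-! Write `T = ι ∘ τ : M → M`, with `ι` the inclusion of the coinvariants. Coinvariants are
stable under the left coaction (the two coactions commute and everything is flat over a field),
and `T` fixes them since `c = T(c₀)c₁ = T(c)1_H`. For the forward direction write `m = T(m₀)m₁`:
quasi-associativity gives `(T(m₀)m₁)h = ω⁻¹(T(m₀)₋₁ ⊗ m₁ ⊗ h₁) T(m₀)₀(m₂h₂)`, the `ω` on the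
right disappearing because `T(m₀)₁ = 1_H`, and applying `T`, which sends `c·x` to `ε(x)c` on
coinvariants, gives the first identity; colinearity of the action gives the second one in the
same way. Conversely, for a coinvariant `c` the first identity reads
`T(ch) = ω⁻¹(c₋₁ ⊗ 1_H ⊗ h)c₀ = ε(h)c`. -/

namespace DualQuasiBialgebra

variable {k : Type u} [Field k] {H : Type u} [AddCommGroup H] [Module k H]
  (Q : DualQuasiBialgebra k H)

theorem counit_mul_apply (y : H ⊗[k] H) : Q.counit (Q.mul y) = counit2 k Q.counit y :=
  LinearMap.congr_fun Q.counit_mul y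

theorem rid_map_counit2_comul2 {N : Type*} [AddCommGroup N] [Module k N]
    (f : H ⊗[k] H →ₗ[k] N) (y : H ⊗[k] H) :
    TensorProduct.rid k N (map f (counit2 k Q.counit) (comul2 k Q.comul y)) = f y := by
  induction y using TensorProduct.induction_on with
  | zero => simp
  | add y y' hy hy' => simp only [map_add, hy, hy']
  | tmul g h =>
    conv_rhs => rw [← Q.comul_counit g, ← Q.comul_counit h]
    simp only [comul2, LinearMap.coe_comp, Function.comp_apply, LinearEquiv.coe_coe, map_tmul]
    induction Q.comul g using TensorProduct.induction_on with
    | zero => simp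
    | add u u' hu hu' => simp only [map_add, add_tmul, hu, hu']
    | tmul g₁ g₂ =>
      induction Q.comul h using TensorProduct.induction_on with
      | zero => simp
      | add v v' hv hv' => simp only [map_add, tmul_add, hv, hv']
      | tmul h₁ h₂ =>
        simp only [counit2, LinearMap.coe_comp, Function.comp_apply, map_tmul,
          tensorTensorTensorComm_tmul, LinearMap.mul'_apply, LinearMap.lTensor_tmul, rid_tmul]
        rw [smul_tmul_smul, map_smul]

theorem omegaInv_one_mid (g h : H) :
    Q.omegaInv (g ⊗ₜ[k] (Q.one ⊗ₜ[k] h)) = Q.counit g * Q.counit h := by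
  let φ : H ⊗[k] H →ₗ[k] k := Q.omegaInv ∘ₗ map LinearMap.id ((TensorProduct.mk k H H) Q.one)
  have hconv := LinearMap.congr_fun Q.inv_omega (g ⊗ₜ[k] (Q.one ⊗ₜ[k] h))
  change φ (g ⊗ₜ[k] h) = _
  rw [← Q.rid_map_counit2_comul2 φ (g ⊗ₜ[k] h)]
  simp only [conv, counit3, counit2, comul3, comul2, LinearMap.coe_comp, Function.comp_apply,
    LinearEquiv.coe_coe, map_tmul, Q.comul_one, Q.counit_one, one_mul,
    LinearMap.mul'_apply] at hconv ⊢
  rw [← hconv]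
  induction Q.comul g using TensorProduct.induction_on with
  | zero => simp
  | add u u' hu hu' => simp only [map_add, add_tmul, hu, hu']
  | tmul g₁ g₂ =>
    induction Q.comul h using TensorProduct.induction_on with
    | zero => simp
    | add v v' hv hv' => simp only [map_add, tmul_add, hv, hv']
    | tmul h₁ h₂ => simp [φ, Q.omega_one_mid, mul_comm]

end DualQuasiBialgebra

namespace Bicomodule

variable {k : Type u} [Field k] {H : Type u} [AddCommGroup H] [Module k H]
  {Q : DualQuasiBialgebra k H} {M : Type u} [AddCommGroup M] [Module k M]
  (B : Bicomodule k H Q M) {T : M →ₗ[k] M}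

theorem coactR_of_mem_coinv {c : M} (hc : c ∈ coinv k Q.one B.coactR) :
    B.coactR c = c ⊗ₜ[k] Q.one := by
  simpa [coinv, sub_eq_zero] using hc

theorem coactL_mem_range_of_mem_coinv {c : M} (hc : c ∈ coinv k Q.one B.coactR) :
    B.coactL c ∈ LinearMap.range ((coinv k Q.one B.coactR).subtype.lTensor H) := by
  let f := B.coactR - (TensorProduct.mk k M H).flip Q.one
  have hbicom := LinearMap.congr_fun B.bicom c
  simp only [LinearMap.coe_comp, Function.comp_apply, LinearEquiv.coe_coe,
    B.coactR_of_mem_coinv hc, LinearMap.rTensor_tmul] at hbicom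
  have hflip : ∀ w : H ⊗[k] M,
      ((TensorProduct.mk k M H).flip Q.one).lTensor H w
        = TensorProduct.assoc k H M H (w ⊗ₜ Q.one) := by
    intro w
    induction w using TensorProduct.induction_on with
    | zero => simp
    | add w w' hw hw' => simp [add_tmul, hw, hw']
    | tmul x m => simp
  have hker : f.lTensor H (B.coactL c) = 0 := by
    rw [LinearMap.lTensor_sub, LinearMap.sub_apply, sub_eq_zero, hbicom, hflip]
  exact (Module.Flat.lTensor_exact H (LinearMap.exact_subtype_ker_map f) _).mp hker

/-- `c ⊗ (h ⊗ l) ↦ c₀(h₁l₁) ω(c₁ ⊗ h₂ ⊗ l₂)`, the right half of the quasi-associativity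
law `act_act`. -/
def actOmega : M ⊗[k] (H ⊗[k] H) →ₗ[k] M :=
  (TensorProduct.rid k M).toLinearMap ∘ₗ map (B.act ∘ₗ Q.mul.lTensor M) Q.omega ∘ₗ
    (tensorTensorTensorComm k M H (H ⊗[k] H) (H ⊗[k] H)).toLinearMap ∘ₗ
    map B.coactR (comul2 k Q.comul)

theorem act_act_tmul (m : M) (h' h : H) :
    B.act (B.act (m ⊗ₜ h') ⊗ₜ h) = B.actOmega (TensorProduct.lid k _ (map Q.omegaInv LinearMap.id
      (tensorTensorTensorComm k H M (H ⊗[k] H) (H ⊗[k] H)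
        (B.coactL m ⊗ₜ comul2 k Q.comul (h' ⊗ₜ h))))) := by
  simpa [actOmega] using LinearMap.congr_fun B.act_act ((m ⊗ₜ h') ⊗ₜ h)

theorem actOmega_of_mem_coinv {c : M} (hc : c ∈ coinv k Q.one B.coactR) (y : H ⊗[k] H) :
    B.actOmega (c ⊗ₜ y) = B.act (c ⊗ₜ Q.mul y) := by
  change _ = (B.act ∘ₗ TensorProduct.mk k M H c ∘ₗ Q.mul) y
  rw [← Q.rid_map_counit2_comul2 (B.act ∘ₗ TensorProduct.mk k M H c ∘ₗ Q.mul) y]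
  simp only [actOmega, LinearMap.coe_comp, Function.comp_apply, LinearEquiv.coe_coe, map_tmul,
    B.coactR_of_mem_coinv hc]
  induction comul2 k Q.comul y using TensorProduct.induction_on with
  | zero => simp
  | add z z' hz hz' => simp only [tmul_add, map_add, hz, hz']
  | tmul y₁ y₂ => simp [Q.omega_one_left]

theorem apply_act_act_of_mem_coinv
    (hT : ∀ c ∈ coinv k Q.one B.coactR, ∀ h, T (B.act (c ⊗ₜ h)) = Q.counit h • c)
    {n : M} (hn : n ∈ coinv k Q.one B.coactR) (h' h : H) :
    T (B.act (B.act (n ⊗ₜ h') ⊗ₜ h)) = TensorProduct.lid k M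
      ((Q.omegaInv ∘ₗ (TensorProduct.mk k H (H ⊗[k] H)).flip (h' ⊗ₜ h)).rTensor M
        (B.coactL n)) := by
  obtain ⟨w, hw⟩ := B.coactL_mem_range_of_mem_coinv hn
  rw [act_act_tmul, ← hw]
  clear hw
  induction w using TensorProduct.induction_on with
  | zero => simp
  | add w w' hw hw' => simp only [map_add, add_tmul, hw, hw']
  | tmul x c =>
    have hcounit := Q.rid_map_counit2_comul2 (Q.omegaInv ∘ₗ TensorProduct.mk k H _ x) (h' ⊗ₜ h)
    simp only [LinearMap.lTensor_tmul, LinearMap.rTensor_tmul, lid_tmul, LinearMap.coe_comp,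
      Function.comp_apply, LinearMap.flip_apply, TensorProduct.mk_apply] at hcounit ⊢
    rw [← hcounit]
    induction comul2 k Q.comul (h' ⊗ₜ h) using TensorProduct.induction_on with
    | zero => simp
    | add z z' hz hz' => simp only [tmul_add, map_add, add_smul, hz, hz']
    | tmul y₁ y₂ =>
      simp [B.actOmega_of_mem_coinv c.2, hT _ c.2, Q.counit_mul_apply, smul_smul, mul_comm]

theorem lTensor_coactL_act_of_mem_coinv
    (hT : ∀ c ∈ coinv k Q.one B.coactR, ∀ h, T (B.act (c ⊗ₜ h)) = Q.counit h • c)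
    {n : M} (hn : n ∈ coinv k Q.one B.coactR) (b : H) :
    T.lTensor H (B.coactL (B.act (n ⊗ₜ b)))
      = (Q.mul ∘ₗ (TensorProduct.mk k H H).flip b).rTensor M (B.coactL n) := by
  obtain ⟨w, hw⟩ := B.coactL_mem_range_of_mem_coinv hn
  have hcolin := LinearMap.congr_fun B.coactL_act (n ⊗ₜ b)
  simp only [LinearMap.coe_comp, Function.comp_apply, LinearEquiv.coe_coe, map_tmul] at hcolin
  rw [hcolin, ← hw]
  clear hw hcolin
  induction w using TensorProduct.induction_on with
  | zero => simp
  | add w w' hw hw' => simp only [map_add, add_tmul, hw, hw']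
  | tmul x c =>
    simp only [LinearMap.lTensor_tmul, LinearMap.rTensor_tmul, LinearMap.coe_comp,
      Function.comp_apply, LinearMap.flip_apply, TensorProduct.mk_apply]
    conv_rhs => rw [← Q.comul_counit b]
    induction Q.comul b using TensorProduct.induction_on with
    | zero => simp
    | add z z' hz hz' => simp only [tmul_add, map_add, add_tmul, hz, hz']
    | tmul b₁ b₂ => simp [hT _ c.2, ← smul_tmul']

theorem apply_act_eq_rhsTauAct
    (hT : ∀ c ∈ coinv k Q.one B.coactR, ∀ h, T (B.act (c ⊗ₜ h)) = Q.counit h • c)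
    (hT_mem : ∀ m, T m ∈ coinv k Q.one B.coactR)
    (hsection : ∀ m, B.act (map T LinearMap.id (B.coactR m)) = m) (m : M) (h : H) :
    T (B.act (m ⊗ₜ h)) = rhsTauAct k B T (m ⊗ₜ h) := by
  conv_lhs => rw [← hsection m]
  simp only [rhsTauAct, LinearMap.coe_comp, Function.comp_apply, LinearEquiv.coe_coe,
    LinearMap.rTensor_tmul]
  induction B.coactR m using TensorProduct.induction_on with
  | zero => simp
  | add v v' hv hv' => simp only [map_add, add_tmul, hv, hv']
  | tmul a b =>
    rw [map_tmul, LinearMap.id_apply, B.apply_act_act_of_mem_coinv hT (hT_mem a)]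
    simp only [LinearMap.rTensor_tmul, LinearMap.coe_comp, Function.comp_apply]
    induction B.coactL (T a) using TensorProduct.induction_on with
    | zero => simp
    | add w w' hw hw' => simp only [map_add, add_tmul, hw, hw']
    | tmul x c => simp

theorem lTensor_coactL_eq_rhsColinear
    (hT : ∀ c ∈ coinv k Q.one B.coactR, ∀ h, T (B.act (c ⊗ₜ h)) = Q.counit h • c)
    (hT_mem : ∀ m, T m ∈ coinv k Q.one B.coactR)
    (hsection : ∀ m, B.act (map T LinearMap.id (B.coactR m)) = m) (m : M) :
    T.lTensor H (B.coactL m) = rhsColinear k B T m := by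
  conv_lhs => rw [← hsection m]
  simp only [rhsColinear, LinearMap.coe_comp, Function.comp_apply, LinearEquiv.coe_coe]
  induction B.coactR m using TensorProduct.induction_on with
  | zero => simp
  | add v v' hv hv' => simp only [map_add, hv, hv']
  | tmul a b =>
    rw [map_tmul, LinearMap.id_apply, B.lTensor_coactL_act_of_mem_coinv hT (hT_mem a)]
    simp only [LinearMap.rTensor_tmul, LinearMap.coe_comp, Function.comp_apply]
    induction B.coactL (T a) using TensorProduct.induction_on with
    | zero => simp
    | add w w' hw hw' => simp only [map_add, add_tmul, hw, hw']
    | tmul x c => simp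

theorem rhsTauAct_of_mem_coinv {c : M} (hc : c ∈ coinv k Q.one B.coactR)
    (h : H) : rhsTauAct k B T (c ⊗ₜ h) = Q.counit h • T c := by
  simp only [rhsTauAct, LinearMap.coe_comp, Function.comp_apply, LinearEquiv.coe_coe,
    LinearMap.rTensor_tmul, B.coactR_of_mem_coinv hc]
  conv_rhs => rw [← B.counitL (T c)]
  induction B.coactL (T c) using TensorProduct.induction_on with
  | zero => simp
  | add w w' hw hw' => simp only [map_add, add_tmul, smul_add, hw, hw']
  | tmul x m => simp [Q.omegaInv_one_mid, smul_smul, mul_comm]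

theorem apply_eq_self_of_mem_coinv (hsection : ∀ m, B.act (map T LinearMap.id (B.coactR m)) = m)
    {c : M} (hc : c ∈ coinv k Q.one B.coactR) : T c = c := by
  simpa [B.coactR_of_mem_coinv hc, B.act_one] using hsection c

end Bicomodule

/-- Let `τ : M → M^{coH}` be a linear map with `τ(m₀)m₁ = m` for all
`m ∈ M`. Then `τ(mh) = ε(h)m` for all coinvariant `m` and all `h` if and only if both
`τ(mh) = ω⁻¹(τ(m₀)₋₁ ⊗ m₁ ⊗ h) · τ(m₀)₀` and `m₋₁ ⊗ τ(m₀) = τ(m₀)₋₁m₁ ⊗ τ(m₀)₀` hold. -/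
theorem tau_conditions_equivalent
    (k : Type u) [Field k] (H : Type u) [AddCommGroup H] [Module k H]
    (Q : DualQuasiBialgebra k H)
    (M : Type u) [AddCommGroup M] [Module k M] (B : Bicomodule k H Q M)
    (t : M →ₗ[k] ↥(coinv k Q.one B.coactR))
    (hinv : ∀ m : M, epsM k B ((map t (LinearMap.id : H →ₗ[k] H)) (B.coactR m)) = m) :
    (∀ (m : ↥(coinv k Q.one B.coactR)) (h : H),
        t (B.act ((m : M) ⊗ₜ[k] h)) = Q.counit h • m)
    ↔ ((∀ (m : M) (h : H),
          ((coinv k Q.one B.coactR).subtype (t (B.act (m ⊗ₜ[k] h))))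
            = rhsTauAct k B ((coinv k Q.one B.coactR).subtype ∘ₗ t) (m ⊗ₜ[k] h)) ∧
        (∀ m : M,
          (((coinv k Q.one B.coactR).subtype ∘ₗ t).lTensor H) (B.coactL m)
            = rhsColinear k B ((coinv k Q.one B.coactR).subtype ∘ₗ t) m)) := by
  set T := (coinv k Q.one B.coactR).subtype ∘ₗ t with hT_def
  have hT_mem : ∀ m, T m ∈ coinv k Q.one B.coactR := fun m => (t m).2
  have hsection : ∀ m, B.act (map T LinearMap.id (B.coactR m)) = m := by
    intro m
    rw [hT_def, ← LinearMap.comp_id LinearMap.id, map_comp]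
    exact hinv m
  have hcounit_iff : (∀ (c : ↥(coinv k Q.one B.coactR)) (h : H),
      t (B.act ((c : M) ⊗ₜ[k] h)) = Q.counit h • c) ↔
      ∀ c ∈ coinv k Q.one B.coactR, ∀ h, T (B.act (c ⊗ₜ h)) = Q.counit h • c := by
    simp [T, Subtype.ext_iff]
  rw [hcounit_iff]
  constructor
  · intro hcounit
    exact ⟨B.apply_act_eq_rhsTauAct hcounit hT_mem hsection,
      B.lTensor_coactL_eq_rhsColinear hcounit hT_mem hsection⟩
  · rintro ⟨hact, -⟩ c hc h
    calc T (B.act (c ⊗ₜ h)) = rhsTauAct k B T (c ⊗ₜ h) := hact c h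
      _ = Q.counit h • T c := B.rhsTauAct_of_mem_coinv hc h
      _ = Q.counit h • c := by rw [B.apply_eq_self_of_mem_coinv hsection hc]
end
end

section
/- Let H be a dual quasi-bialgebra over a field k and let M be a right dual quasi-Hopf H-bicomodule. Then the k-linear map ε_M : M^{coH}⊗H → M, ε_M(m⊗h)=mh, is bijective if and only if there exists a k-linear map τ:M→M^{coH} such that τ(m₀)m₁ = m for all m∈M and τ(mh)=ε(h)m for all m∈M^{coH}, h∈H. -/
/-! Preliminaries: dual quasi-bialgebras, preantipodes and right dual
quasi-Hopf bicomodules, formulated via linear maps over a field `k`.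
All Sweedler-notation identities are encoded as identities of (composites of)
linear maps on tensor products. -/

open TensorProduct

set_option maxHeartbeats 1000000
set_option synthInstance.maxHeartbeats 400000

noncomputable section

universe u

/-! For a coinvariant `n` the right colinearity of the action gives `ρʳ(nh) = nh₁ ⊗ h₂`.
Hence any `τ` with `τ(nh) = ε(h)n` makes `m ↦ τ(m₀) ⊗ m₁` a left inverse of `ε_M`, which is
a two-sided inverse exactly when `τ(m₀)m₁ = m`. Conversely, if `ε_M` is bijective then
`τ := (id ⊗ ε) ∘ ε_M⁻¹` has both properties. -/

theorem DualQuasiBialgebra.rTensor_counit_comul {k : Type u} [Field k] {H : Type u}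
    [AddCommGroup H] [Module k H] (Q : DualQuasiBialgebra k H) (h : H) :
    Q.counit.rTensor H (Q.comul h) = (1 : k) ⊗ₜ[k] h :=
  (TensorProduct.lid k H).injective (by simpa using Q.counit_comul h)

section Coinvariants

variable {k : Type u} [Field k] {H : Type u} [AddCommGroup H] [Module k H]
  {M : Type u} [AddCommGroup M] [Module k M] {Q : DualQuasiBialgebra k H}
  (B : Bicomodule k H Q M)

theorem coactR_eq_tmul_one_of_mem_coinv (n : coinv k Q.one B.coactR) :
    B.coactR (n : M) = (n : M) ⊗ₜ[k] Q.one :=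
  sub_eq_zero.mp (LinearMap.mem_ker.mp n.2)

theorem coactR_act_of_mem_coinv (n : coinv k Q.one B.coactR) (h : H) :
    B.coactR (B.act ((n : M) ⊗ₜ[k] h))
      = (B.act ∘ₗ TensorProduct.mk k M H n).rTensor H (Q.comul h) := by
  have hcolin := LinearMap.congr_fun B.coactR_act ((n : M) ⊗ₜ[k] h)
  simp only [LinearMap.comp_apply, map_tmul, coactR_eq_tmul_one_of_mem_coinv] at hcolin
  rw [hcolin]
  induction Q.comul h using TensorProduct.induction_on with
  | zero => simp
  | tmul a b => simp [Q.one_mul']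
  | add x y hx hy => simp only [tmul_add, map_add, hx, hy]

theorem epsM_tmul (n : coinv k Q.one B.coactR) (h : H) :
    epsM k B (n ⊗ₜ[k] h) = B.act ((n : M) ⊗ₜ[k] h) := rfl

theorem leftInverse_map_coactR_epsM (t : M →ₗ[k] coinv k Q.one B.coactR)
    (ht : ∀ (n : coinv k Q.one B.coactR) (h : H), t (B.act ((n : M) ⊗ₜ[k] h)) = Q.counit h • n) :
    Function.LeftInverse (fun m => map t LinearMap.id (B.coactR m)) (epsM k B) := by
  intro x
  induction x using TensorProduct.induction_on with
  | zero => simp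
  | add x y hx hy => simp only [map_add, hx, hy]
  | tmul n h =>
    have ht' : t ∘ₗ B.act ∘ₗ TensorProduct.mk k M H n
        = LinearMap.toSpanSingleton k _ n ∘ₗ Q.counit :=
      LinearMap.ext fun h => ht n h
    simp only [epsM_tmul, coactR_act_of_mem_coinv]
    rw [← LinearMap.comp_apply (map t _), LinearMap.map_comp_rTensor, ht',
      ← LinearMap.rTensor_def, LinearMap.rTensor_comp_apply, Q.rTensor_counit_comul]
    simp

end Coinvariants

/-- For a right dual quasi-Hopf `H`-bicomodule `M`, the map
`ε_M : M^{coH} ⊗ H → M` is bijective if and only if there is a linear map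
`τ : M → M^{coH}` with `τ(m₀)m₁ = m` for all `m ∈ M` and `τ(mh) = ε(h)m` for all
coinvariant `m` and all `h ∈ H`. -/
theorem epsM_bijective_iff_exists_tau
    (k : Type u) [Field k] (H : Type u) [AddCommGroup H] [Module k H]
    (Q : DualQuasiBialgebra k H)
    (M : Type u) [AddCommGroup M] [Module k M] (B : Bicomodule k H Q M) :
    Function.Bijective (epsM k B) ↔
      ∃ t : M →ₗ[k] ↥(coinv k Q.one B.coactR),
        (∀ m : M, epsM k B ((map t (LinearMap.id : H →ₗ[k] H)) (B.coactR m)) = m) ∧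
        (∀ (m : ↥(coinv k Q.one B.coactR)) (h : H),
          t (B.act ((m : M) ⊗ₜ[k] h)) = Q.counit h • m) := by
  constructor
  · intro hbij
    let e := LinearEquiv.ofBijective (epsM k B) hbij
    let t := (TensorProduct.rid k _).toLinearMap ∘ₗ Q.counit.lTensor _ ∘ₗ e.symm.toLinearMap
    have ht : ∀ (n : coinv k Q.one B.coactR) (h : H),
        t (B.act ((n : M) ⊗ₜ[k] h)) = Q.counit h • n := by
      intro n h
      have he : e.symm (B.act ((n : M) ⊗ₜ[k] h)) = n ⊗ₜ[k] h :=
        e.symm_apply_eq.mpr rfl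
      simp [t, he]
    exact ⟨t, (leftInverse_map_coactR_epsM B t ht).rightInverse_of_surjective hbij.2, ht⟩
  · rintro ⟨t, hright, ht⟩
    exact Function.bijective_iff_has_inverse.mpr
      ⟨_, leftInverse_map_coactR_epsM B t ht, hright⟩

end
end
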